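/- Let Λ > 0 and define the 4×4 complex matrices 𝔯 := √Λ (J₁ ⊗ J₂ − J₂ ⊗ J₁) and r₋ := −(τ₁ ⊗ J₁ + τ₂ ⊗ J₂ + τ₃ ⊗ J₃). Then for every h ∈ SU(2), the identity [𝔯, h ⊗ h] = −[r₋, h ⊗ h] holds; equivalently, 𝔯 + r₋ commutes with h ⊗ h for every h ∈ SU(2). -/

import Mathlib

open Matrix Kronecker

/-- `h` is an element of SU(2): a 2×2 complex matrix with `h†h = 1` and `det h = 1`. -/
def isSU2 (h : Matrix (Fin 2) (Fin 2) ℂ) : Prop :=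
  h.conjTranspose * h = 1 ∧ h.det = 1

/-- The (halved) Pauli matrices σ₁, σ₂, σ₃. -/
noncomputable def sigM : Fin 3 → Matrix (Fin 2) (Fin 2) ℂ :=
  ![(1 / 2 : ℂ) • !![0, 1; 1, 0],
    (1 / 2 : ℂ) • !![0, -Complex.I; Complex.I, 0],
    (1 / 2 : ℂ) • !![1, 0; 0, -1]]

/-- The rotation generators `J_I := -i σ_I`. -/
noncomputable def Jmat : Fin 3 → Matrix (Fin 2) (Fin 2) ℂ :=
  fun I => (-Complex.I) • sigM I

/-- The matrices ξ₁, ξ₂, ξ₃. -/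
noncomputable def xiM : Fin 3 → Matrix (Fin 2) (Fin 2) ℂ :=
  ![!![0, 0; Complex.I, 0],
    !![0, 0; -1, 0],
    (Complex.I / 2) • !![1, 0; 0, -1]]

/-- The translation generators `τ_I := i √Λ ξ_I`. -/
noncomputable def tauM (Λ : ℝ) : Fin 3 → Matrix (Fin 2) (Fin 2) ℂ :=
  fun I => (Complex.I * (Real.sqrt Λ : ℂ)) • xiM I

/-- The little r-matrix `𝔯 := √Λ (J₁ ⊗ J₂ − J₂ ⊗ J₁)`. -/
noncomputable def rFrak (Λ : ℝ) : Matrix (Fin 2 × Fin 2) (Fin 2 × Fin 2) ℂ :=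
  (Real.sqrt Λ : ℂ) • (Jmat 0 ⊗ₖ Jmat 1 - Jmat 1 ⊗ₖ Jmat 0)

/-- The r-matrix `r₋ := −(τ₁ ⊗ J₁ + τ₂ ⊗ J₂ + τ₃ ⊗ J₃)`. -/
noncomputable def rMinus (Λ : ℝ) : Matrix (Fin 2 × Fin 2) (Fin 2 × Fin 2) ℂ :=
  -(tauM Λ 0 ⊗ₖ Jmat 0 + tauM Λ 1 ⊗ₖ Jmat 1 + tauM Λ 2 ⊗ₖ Jmat 2)
/-!
The sum `𝔯 + r₋` equals `√Λ (i/4 · 1 − i/2 · P)`, where `P` is the flip of `ℂ² ⊗ ℂ²`. Both `1` and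
`P` commute with `h ⊗ h` for every 2×2 matrix `h`, so `[𝔯 + r₋, h ⊗ h] = 0`.
-/

def swapMatrix (m R : Type*) [DecidableEq m] [Zero R] [One R] : Matrix (m × m) (m × m) R :=
  (Equiv.prodComm m m).toPEquiv.toMatrix

theorem swapMatrix_mul_kronecker {m R : Type*} [Fintype m] [DecidableEq m] [CommSemiring R]
    (a b : Matrix m m R) : swapMatrix m R * (a ⊗ₖ b) = (b ⊗ₖ a) * swapMatrix m R := by
  ext ⟨i, j⟩ ⟨k, l⟩
  simp [swapMatrix, PEquiv.toMatrix_toPEquiv_mul, PEquiv.mul_toMatrix_toPEquiv, mul_comm]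

theorem commute_swapMatrix_kronecker_self {m R : Type*} [Fintype m] [DecidableEq m]
    [CommSemiring R] (a : Matrix m m R) : Commute (swapMatrix m R) (a ⊗ₖ a) :=
  swapMatrix_mul_kronecker a a

theorem mul_sub_mul_eq_neg_of_commute_add {A : Type*} [Ring A] {a b x : A}
    (h : Commute (a + b) x) : a * x - x * a = -(b * x - x * b) := by
  rw [neg_sub, sub_eq_sub_iff_add_eq_add, ← add_mul, h.eq, mul_add, add_comm]

theorem rFrak_add_rMinus (Λ : ℝ) :
    rFrak Λ + rMinus Λ
      = (Real.sqrt Λ : ℂ) • ((Complex.I / 4) • 1 - (Complex.I / 2) • swapMatrix (Fin 2) ℂ) := by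
  ext ⟨i, j⟩ ⟨k, l⟩
  fin_cases i <;> fin_cases j <;> fin_cases k <;> fin_cases l <;>
    simp [rFrak, rMinus, tauM, Jmat, sigM, xiM, swapMatrix, Prod.ext_iff] <;>
    ring_nf <;> simp only [Complex.I_pow_three] <;> ring

theorem little_r_matrix_group_general (Λ : ℝ)
    (h : Matrix (Fin 2) (Fin 2) ℂ) :
    rFrak Λ * (h ⊗ₖ h) - (h ⊗ₖ h) * rFrak Λ
      = -(rMinus Λ * (h ⊗ₖ h) - (h ⊗ₖ h) * rMinus Λ) := by
  have hcomm : Commute (rFrak Λ + rMinus Λ) (h ⊗ₖ h) := by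
    rw [rFrak_add_rMinus]
    exact (((Commute.one_left _).smul_left _).sub_left
      ((commute_swapMatrix_kronecker_self h).smul_left _)).smul_left _
  exact mul_sub_mul_eq_neg_of_commute_add hcomm

/-- For every `h ∈ SU(2)`, `[𝔯, h⊗h] = −[r₋, h⊗h]`. -/
theorem little_r_matrix_group (Λ : ℝ) (hΛ : 0 < Λ)
    (h : Matrix (Fin 2) (Fin 2) ℂ) (hh : isSU2 h) :
    rFrak Λ * (h ⊗ₖ h) - (h ⊗ₖ h) * rFrak Λ
      = -(rMinus Λ * (h ⊗ₖ h) - (h ⊗ₖ h) * rMinus Λ) :=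
  little_r_matrix_group_general Λ h
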